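/- arXiv:2111.13227 — 6 statements merged into one kernel-verified Lean document; each statement's English description precedes it below -/
import Mathlib

section
/- Let α > 0, L > 0, and let ω ∈ ℂ satisfy Re ω > 0 and Im ω ≥ 0. Then the determinant D_α(ω) := (1 − iα/ω) · e^{ωL} · (1 − e^{−ωL}) · (e^{−ωL} − (3ω + iα)/(ω − iα)) is different from zero. -/
open Complex

/-- The determinant `D_α(ω)` of the transmission-condition linear systems arising in the
construction of the resolvent of the dissipative Schrödinger operator on the tadpole graph
does not vanish for `Re ω > 0`, `Im ω ≥ 0`. -/
theorem determinant_ne_zero (α L : ℝ) (hα : 0 < α) (hL : 0 < L) (ω : ℂ)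
    (hre : 0 < ω.re) (him : 0 ≤ ω.im) :
    (1 - Complex.I * (α : ℂ) / ω) * Complex.exp (ω * L) * (1 - Complex.exp (-ω * L)) *
      (Complex.exp (-ω * L) - (3 * ω + Complex.I * (α : ℂ)) / (ω - Complex.I * (α : ℂ))) ≠ 0 := by
  have hω : ω ≠ 0 := by
    intro h; rw [h] at hre; simp at hre
  have hden : ω - Complex.I * (α : ℂ) ≠ 0 := by
    intro h
    have : (ω - Complex.I * (α : ℂ)).re = 0 := by rw [h]; simp
    simp [Complex.sub_re, Complex.mul_re] at this
    linarith
  -- modulus of exp(-ωL) < 1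
  have habsE : ‖Complex.exp (-ω * L)‖ < 1 := by
    rw [Complex.norm_exp]
    have : (-ω * (L : ℂ)).re = -(ω.re * L) := by simp [Complex.mul_re]
    rw [this]
    have : -(ω.re * L) < 0 := by nlinarith
    calc Real.exp (-(ω.re * L)) < Real.exp 0 := Real.exp_lt_exp.mpr this
      _ = 1 := Real.exp_zero
  have h1 : 1 - Complex.I * (α : ℂ) / ω ≠ 0 := by
    intro h
    have h' : Complex.I * (α : ℂ) = ω := by
      field_simp at h
      linear_combination -h
    have : (Complex.I * (α : ℂ)).re = ω.re := by rw [h']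
    simp [Complex.mul_re] at this
    linarith
  have h2 : Complex.exp (ω * L) ≠ 0 := Complex.exp_ne_zero _
  have h3 : 1 - Complex.exp (-ω * L) ≠ 0 := by
    intro h
    have : Complex.exp (-ω * L) = 1 := by linear_combination -h
    rw [this] at habsE
    simp at habsE
  have h4 : Complex.exp (-ω * L) -
      (3 * ω + Complex.I * (α : ℂ)) / (ω - Complex.I * (α : ℂ)) ≠ 0 := by
    intro h
    have heq : Complex.exp (-ω * L) =
        (3 * ω + Complex.I * (α : ℂ)) / (ω - Complex.I * (α : ℂ)) := by
      linear_combination h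
    have hnum : ‖ω - Complex.I * (α : ℂ)‖ <
        ‖3 * ω + Complex.I * (α : ℂ)‖ := by
      have h5 : ‖ω - Complex.I * (α : ℂ)‖ ^ 2 <
          ‖3 * ω + Complex.I * (α : ℂ)‖ ^ 2 := by
        rw [Complex.sq_norm, Complex.sq_norm]
        simp [Complex.normSq_apply, Complex.add_re, Complex.add_im, Complex.sub_re,
          Complex.sub_im, Complex.mul_re, Complex.mul_im]
        nlinarith [sq_nonneg ω.im, hre, him, hα]
      have := norm_nonneg (ω - Complex.I * (α : ℂ))
      nlinarith [norm_nonneg (3 * ω + Complex.I * (α : ℂ))]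
    have hgt : 1 < ‖(3 * ω + Complex.I * (α : ℂ)) / (ω - Complex.I * (α : ℂ))‖ := by
      rw [norm_div]
      rw [one_lt_div (norm_pos_iff.mpr hden)]
      exact hnum
    rw [← heq] at hgt
    linarith
  exact mul_ne_zero (mul_ne_zero (mul_ne_zero h1 h2) h3) h4
end

section
/- Let α > 0 and let ω ∈ ℂ satisfy Re ω > 0 and Im ω ≥ 0. Then |3ω + iα| > |ω − iα|; consequently, for every L > 0, |e^{−ωL}| < 1 < |(3ω + iα)/(ω − iα)|, and in particular e^{−ωL} ≠ (3ω + iα)/(ω − iα). -/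
open Complex

/-! Writing `ω = x + iy`, a direct expansion gives
`|3ω + iα|² - |ω - iα|² = 8 (x² + y² + α y)`, which is positive when `x > 0` and `α, y ≥ 0`.
On the other side, `|e^{-ωL}| = e^{-L Re ω} < 1`. -/

namespace Complex

theorem normSq_three_mul_add_I_mul_sub_normSq_sub_I_mul (ω : ℂ) (α : ℝ) :
    normSq (3 * ω + I * α) - normSq (ω - I * α) = 8 * (normSq ω + α * ω.im) := by
  simp only [normSq_apply, add_re, add_im, sub_re, sub_im, mul_re, mul_im, I_re, I_im,
    ofReal_re, ofReal_im, re_ofNat, im_ofNat]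
  ring

theorem norm_sub_I_mul_lt_norm_three_mul_add_I_mul {ω : ℂ} {α : ℝ} (hα : 0 ≤ α)
    (hre : 0 < ω.re) (him : 0 ≤ ω.im) :
    ‖ω - I * α‖ < ‖3 * ω + I * α‖ := by
  have hω : 0 < normSq ω := normSq_pos.mpr fun h => hre.ne' (by simp [h])
  have hdiff := normSq_three_mul_add_I_mul_sub_normSq_sub_I_mul ω α
  rw [← sq_lt_sq₀ (norm_nonneg _) (norm_nonneg _), Complex.sq_norm, Complex.sq_norm]
  nlinarith [mul_nonneg hα him]

theorem sub_I_mul_ofReal_ne_zero {ω : ℂ} (hre : 0 < ω.re) (α : ℝ) : ω - I * α ≠ 0 :=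
  fun h => hre.ne' (by simpa using congrArg re h)

theorem norm_exp_neg_mul_ofReal_lt_one {ω : ℂ} (hre : 0 < ω.re) {L : ℝ} (hL : 0 < L) :
    ‖exp (-ω * L)‖ < 1 := by
  rw [norm_exp, Real.exp_lt_one_iff, re_mul_ofReal, neg_re]
  exact mul_neg_of_neg_of_pos (neg_neg_of_pos hre) hL

end Complex

/-- For `α > 0` and `ω ∈ ℂ` with `Re ω > 0`, `Im ω ≥ 0`, one has `|3ω + iα| > |ω − iα|`;
consequently, for every `L > 0`, `|e^{−ωL}| < 1 < |(3ω + iα)/(ω − iα)|`, and in particular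
`e^{−ωL} ≠ (3ω + iα)/(ω − iα)`. -/
theorem modulus_estimate (α : ℝ) (hα : 0 < α) (ω : ℂ) (hre : 0 < ω.re) (him : 0 ≤ ω.im) :
    ‖ω - Complex.I * (α : ℂ)‖ < ‖3 * ω + Complex.I * (α : ℂ)‖ ∧
    ∀ L : ℝ, 0 < L →
      ‖Complex.exp (-ω * L)‖ < 1 ∧
      1 < ‖(3 * ω + Complex.I * (α : ℂ)) / (ω - Complex.I * (α : ℂ))‖ ∧
      Complex.exp (-ω * L) ≠ (3 * ω + Complex.I * (α : ℂ)) / (ω - Complex.I * (α : ℂ)) := by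
  have hnorm := norm_sub_I_mul_lt_norm_three_mul_add_I_mul hα.le hre him
  have hquot : 1 < ‖(3 * ω + I * α) / (ω - I * α)‖ := by
    rw [norm_div, one_lt_div (norm_pos_iff.mpr (sub_I_mul_ofReal_ne_zero hre α))]
    exact hnorm
  refine ⟨hnorm, fun L hL => ?_⟩
  have hexp := norm_exp_neg_mul_ofReal_lt_one hre hL
  exact ⟨hexp, hquot, fun h => (hexp.trans (h ▸ hquot)).false⟩
end

section
/- Let α > 0, L > 0, and let λ ∈ ℂ with Re λ > 0 and Im λ > 0. Then there exists a pair (A₂, B₂) ∈ ℂ² with (A₂, B₂) ≠ (0,0) satisfying the linear system (1 − e^{iλL}) A₂ + (1 − e^{−iλL}) B₂ = 0 and (2 − α/λ − e^{iλL}) A₂ + (e^{−iλL} − α/λ) B₂ = 0 if and only if e^{iλL} = 3 − 4α/(λ + α). -/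
open Complex

/-- The linear system expressing the transmission conditions for an eigenfunction of the
dissipative Schrödinger operator on the tadpole graph has a nontrivial solution `(A₂, B₂)`
if and only if the characteristic equation `e^{iλL} = 3 − 4α/(λ + α)` holds. -/
theorem eigenvalue_characteristic_equation (α L : ℝ) (hα : 0 < α) (hL : 0 < L)
    (lam : ℂ) (hre : 0 < lam.re) (him : 0 < lam.im) :
    (∃ A₂ B₂ : ℂ, (A₂, B₂) ≠ (0, 0) ∧
      (1 - Complex.exp (Complex.I * lam * L)) * A₂ +
        (1 - Complex.exp (-(Complex.I) * lam * L)) * B₂ = 0 ∧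
      (2 - (α : ℂ) / lam - Complex.exp (Complex.I * lam * L)) * A₂ +
        (Complex.exp (-(Complex.I) * lam * L) - (α : ℂ) / lam) * B₂ = 0) ↔
    Complex.exp (Complex.I * lam * L) = 3 - 4 * (α : ℂ) / (lam + (α : ℂ)) := by
  set E := Complex.exp (Complex.I * lam * L) with hEdef
  have hexp : Complex.exp (-(Complex.I) * lam * L) = E⁻¹ := by
    rw [show -(Complex.I) * lam * (L:ℂ) = -(Complex.I * lam * L) by ring, Complex.exp_neg]
  have hE0 : E ≠ 0 := Complex.exp_ne_zero _
  have hlam : lam ≠ 0 := by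
    intro h; rw [h] at hre; simp at hre
  have hla : lam + (α : ℂ) ≠ 0 := by
    intro h
    have h2 := congrArg Complex.re h
    simp [Complex.add_re] at h2
    linarith
  have hE1 : E ≠ 1 := by
    intro h
    have habs : ‖E‖ = Real.exp (-(lam.im * L)) := by
      rw [hEdef, Complex.norm_exp]
      congr 1
      simp [Complex.mul_re, Complex.mul_im, Complex.I_re, Complex.I_im]
    rw [h] at habs
    simp at habs
    have hlt : -(lam.im * L) < 0 := by nlinarith
    have hlt2 : Real.exp (-(lam.im * L)) < 1 := by
      calc Real.exp (-(lam.im * L)) < Real.exp 0 := Real.exp_lt_exp.mpr hlt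
        _ = 1 := Real.exp_zero
    linarith
  -- the determinant
  set D : ℂ := (1 - E) * (E⁻¹ - (α : ℂ)/lam) - (1 - E⁻¹) * (2 - (α : ℂ)/lam - E) with hDdef
  have hfac : (1 - E) * ((3 * lam - (α : ℂ)) - E * (lam + (α : ℂ))) = D * (E * lam) := by
    rw [hDdef]
    field_simp
    ring
  have hrhs : (3 : ℂ) - 4 * (α : ℂ) / (lam + (α : ℂ)) = (3 * lam - (α : ℂ)) / (lam + (α : ℂ)) := by
    field_simp
    ring
  have hdet : D = 0 ↔ E = 3 - 4 * (α : ℂ) / (lam + (α : ℂ)) := by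
    rw [hrhs, eq_div_iff hla]
    constructor
    · intro h
      have h0 : (1 - E) * ((3 * lam - (α : ℂ)) - E * (lam + (α : ℂ))) = 0 := by
        rw [hfac, h, zero_mul]
      rcases mul_eq_zero.mp h0 with h1 | h2
      · exact absurd (by linear_combination -h1 : E = 1) hE1
      · have := sub_eq_zero.mp h2
        linear_combination -this
    · intro h
      have h0 : D * (E * lam) = 0 := by
        rw [← hfac]
        have : (3 * lam - (α : ℂ)) - E * (lam + (α : ℂ)) = 0 := by
          rw [h]; ring
        rw [this, mul_zero]
      rcases mul_eq_zero.mp h0 with h1 | h2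
      · exact h1
      · exact absurd h2 (mul_ne_zero hE0 hlam)
  rw [hexp]
  constructor
  · rintro ⟨A, B, hne, h1, h2⟩
    rw [← hdet]
    have hA : D * A = 0 := by
      rw [hDdef]; linear_combination (E⁻¹ - (α : ℂ)/lam) * h1 - (1 - E⁻¹) * h2
    have hB : D * B = 0 := by
      rw [hDdef]; linear_combination (1 - E) * h2 - (2 - (α : ℂ)/lam - E) * h1
    by_contra hD
    apply hne
    have hA0 : A = 0 := by
      rcases mul_eq_zero.mp hA with h | h
      · exact absurd h hD
      · exact h
    have hB0 : B = 0 := by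
      rcases mul_eq_zero.mp hB with h | h
      · exact absurd h hD
      · exact h
    simp [hA0, hB0]
  · intro h
    have hD0 : D = 0 := hdet.mpr h
    refine ⟨1 - E⁻¹, -(1 - E), ?_, by ring, ?_⟩
    · intro hcontra
      have hA : (1 : ℂ) - E⁻¹ = 0 := congrArg Prod.fst hcontra
      have hinv : E⁻¹ = 1 := by linear_combination -hA
      exact hE1 (inv_eq_one.mp hinv)
    · rw [hDdef] at hD0
      linear_combination -hD0
end

section
/- Let L > 0, C₀ > 0, and let (λ_n)_{n ≥ 1} be complex numbers with |λ_n − (2nπ/L + i (ln 3)/L)| ≤ C₀/n for all n ≥ 1. Define φ_n, φ̃_n ∈ L²(0,L) by φ_n(x) := e^{iλ_n x} and φ̃_n(x) := e^{−iλ_n x}. Then there exists a constant C > 0 such that for all integers 1 ≤ n < m: |⟨φ_n, φ_m⟩| + |⟨φ̃_n, φ̃_m⟩| ≤ C/(m − n) and |⟨φ_n, φ̃_m⟩| + |⟨φ̃_n, φ_m⟩| ≤ C/(m + n), where ⟨f, g⟩ := ∫₀^L f(x) conj(g(x)) dx. -/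
/-!
Each Gram entry is `∫₀ᴸ exp (c x) dx` with `c = ± i (λₙ - conj λₘ)` (unmixed entries) or
`c = ± i (λₙ + conj λₘ)` (mixed entries). As `Im λₖ` stays within `C₀` of `ln 3 / L`, `|Re c| ≤ M`
for a fixed `M`, so the integrand is bounded by `exp (M L)`; as `Re λₖ` stays within `C₀` of
`2kπ/L`, `|c| ≥ 2π (m ∓ n) / L - 2 C₀`. Bounding the integral both trivially and by integrating
the exponential gives `min (L, 2 / |c|) · exp (M L) ≲ 1 / (1 + |c|) ≲ 1 / (m ∓ n)`.
-/

open Complex Real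

lemma exp_mul_ofReal_mul_conj_exp (a b : ℂ) (x : ℝ) :
    exp (a * x) * starRingEnd ℂ (exp (b * x)) = exp ((a + starRingEnd ℂ b) * x) := by
  rw [← exp_conj, ← Complex.exp_add, map_mul, conj_ofReal, add_mul]

lemma norm_exp_mul_ofReal_le (c : ℂ) {x L : ℝ} (hx : x ∈ Set.Icc 0 L) :
    ‖exp (c * x)‖ ≤ Real.exp (|c.re| * L) := by
  rw [norm_exp, re_mul_ofReal, Real.exp_le_exp]
  exact (mul_le_mul_of_nonneg_right (le_abs_self _) hx.1).trans
    (mul_le_mul_of_nonneg_left hx.2 (abs_nonneg _))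

lemma norm_integral_exp_mul_le (c : ℂ) {L : ℝ} (hL : 0 ≤ L) :
    ‖∫ x in (0:ℝ)..L, exp (c * x)‖ ≤ L * Real.exp (|c.re| * L) := by
  have := intervalIntegral.norm_integral_le_of_norm_le_const (a := 0) (b := L)
    (f := fun x : ℝ => exp (c * x)) fun x hx =>
      norm_exp_mul_ofReal_le c (Set.Ioc_subset_Icc_self (Set.uIoc_of_le hL ▸ hx))
  rwa [sub_zero, abs_of_nonneg hL, mul_comm] at this

lemma norm_mul_norm_integral_exp_mul_le (c : ℂ) {L : ℝ} (hL : 0 ≤ L) :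
    ‖c‖ * ‖∫ x in (0:ℝ)..L, exp (c * x)‖ ≤ 2 * Real.exp (|c.re| * L) := by
  rcases eq_or_ne c 0 with rfl | hc
  · simp
  rw [integral_exp_mul_complex hc, norm_div, mul_div_cancel₀ _ (norm_ne_zero_iff.2 hc)]
  calc ‖exp (c * L) - exp (c * (0:ℝ))‖ ≤ ‖exp (c * L)‖ + ‖exp (c * (0:ℝ))‖ := norm_sub_le _ _
    _ ≤ Real.exp (|c.re| * L) + Real.exp (|c.re| * L) := by
      gcongr <;> exact norm_exp_mul_ofReal_le c (by simp [hL])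
    _ = 2 * Real.exp (|c.re| * L) := by ring

lemma norm_integral_exp_mul_le_div {L M a B k : ℝ} {c : ℂ} (hL : 0 ≤ L) (ha : 0 < a)
    (hk : 0 < k) (hB : 0 ≤ B) (hre : |c.re| ≤ M) (him : a * k ≤ |c.im| + B) :
    ‖∫ x in (0:ℝ)..L, exp (c * x)‖ ≤ (L + 2) * Real.exp (M * L) * (1 + B) / a / k := by
  have hE : Real.exp (|c.re| * L) ≤ Real.exp (M * L) := by gcongr
  have hint : (1 + ‖c‖) * ‖∫ x in (0:ℝ)..L, exp (c * x)‖ ≤ (L + 2) * Real.exp (M * L) := by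
    nlinarith [norm_integral_exp_mul_le c hL, norm_mul_norm_integral_exp_mul_le c hL]
  have hak : a * k ≤ (1 + B) * (1 + ‖c‖) := by
    nlinarith [abs_im_le_norm c, mul_nonneg hB (norm_nonneg c)]
  rw [div_div, le_div_iff₀ (by positivity)]
  nlinarith [norm_nonneg (∫ x in (0:ℝ)..L, exp (c * x))]

lemma norm_integral_exp_mul_add_norm_integral_exp_neg_mul_le {L M a B k : ℝ} {c : ℂ}
    (hL : 0 ≤ L) (ha : 0 < a) (hk : 0 < k) (hB : 0 ≤ B) (hre : |c.re| ≤ M)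
    (him : a * k ≤ |c.im| + B) :
    ‖∫ x in (0:ℝ)..L, exp (c * x)‖ + ‖∫ x in (0:ℝ)..L, exp (-c * x)‖ ≤
      2 * ((L + 2) * Real.exp (M * L) * (1 + B) / a) / k := by
  have h₁ := norm_integral_exp_mul_le_div hL ha hk hB hre him
  have h₂ := norm_integral_exp_mul_le_div (M := M) (c := -c) hL ha hk hB
    (by rwa [neg_re, abs_neg]) (by rwa [neg_im, abs_neg])
  linarith [show (L + 2) * Real.exp (M * L) * (1 + B) / a / k * 2 =
    2 * ((L + 2) * Real.exp (M * L) * (1 + B) / a) / k by ring]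

lemma abs_re_sub_le_and_abs_im_sub_le {L C₀ : ℝ} {z : ℂ} {n : ℕ} (hC₀ : 0 ≤ C₀) (hn : 1 ≤ n)
    (h : ‖z - (2 * (n : ℂ) * (π : ℂ) / (L : ℂ) + I * (Real.log 3 : ℂ) / (L : ℂ))‖ ≤ C₀ / n) :
    |z.re - n * (2 * π / L)| ≤ C₀ ∧ |z.im - Real.log 3 / L| ≤ C₀ := by
  replace h := h.trans (div_le_self hC₀ (by exact_mod_cast hn))
  constructor
  · refine (le_of_eq_of_le ?_ (abs_re_le_norm _)).trans h
    simp [-ofNat_log, mul_div_assoc, mul_assoc, mul_left_comm]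
  · refine (le_of_eq_of_le ?_ (abs_im_le_norm _)).trans h
    simp [-ofNat_log]

section Frequencies

variable {p q : ℂ} {ω β C n m : ℝ}

lemma abs_re_I_mul_add_conj_I_mul_le (hβ : 0 ≤ β) (hp : |p.im - β| ≤ C) (hq : |q.im - β| ≤ C) :
    |(I * p + starRingEnd ℂ (I * q)).re| ≤ 2 * β + 2 * C := by
  have hre : (I * p + starRingEnd ℂ (I * q)).re = -p.im - q.im := by simp [sub_eq_add_neg]
  rw [hre, abs_le]
  constructor <;> linarith [abs_le.1 hp, abs_le.1 hq]

lemma le_abs_im_I_mul_add_conj_I_mul (hp : |p.re - n * ω| ≤ C) (hq : |q.re - m * ω| ≤ C) :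
    ω * (m - n) ≤ |(I * p + starRingEnd ℂ (I * q)).im| + 2 * C := by
  have him : (I * p + starRingEnd ℂ (I * q)).im = p.re - q.re := by simp [sub_eq_add_neg]
  rw [him]
  linarith [neg_le_abs (p.re - q.re), abs_le.1 hp, abs_le.1 hq]

lemma abs_re_I_mul_add_conj_neg_I_mul_le (hβ : 0 ≤ β) (hp : |p.im - β| ≤ C)
    (hq : |q.im - β| ≤ C) : |(I * p + starRingEnd ℂ (-I * q)).re| ≤ 2 * β + 2 * C := by
  have hre : (I * p + starRingEnd ℂ (-I * q)).re = q.im - p.im := by simp [sub_eq_neg_add]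
  rw [hre, abs_le]
  constructor <;> linarith [abs_le.1 hp, abs_le.1 hq]

lemma le_abs_im_I_mul_add_conj_neg_I_mul (hp : |p.re - n * ω| ≤ C) (hq : |q.re - m * ω| ≤ C) :
    ω * (m + n) ≤ |(I * p + starRingEnd ℂ (-I * q)).im| + 2 * C := by
  have him : (I * p + starRingEnd ℂ (-I * q)).im = p.re + q.re := by simp
  rw [him]
  linarith [le_abs_self (p.re + q.re), abs_le.1 hp, abs_le.1 hq]

end Frequencies

/-- Gram estimates for the exponentials `φ_n(x) = e^{iλ_n x}`, `φ̃_n(x) = e^{−iλ_n x}` in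
`L²(0, L)`, where `λ_n = 2nπ/L + i ln(3)/L + O(1/n)`: for `1 ≤ n < m`,
`|⟨φ_n, φ_m⟩| + |⟨φ̃_n, φ̃_m⟩| ≤ C/(m − n)` and `|⟨φ_n, φ̃_m⟩| + |⟨φ̃_n, φ_m⟩| ≤ C/(m + n)`. -/
theorem gram_estimates (L : ℝ) (hL : 0 < L) (C₀ : ℝ) (hC₀ : 0 < C₀) (lam : ℕ → ℂ)
    (hlam : ∀ n : ℕ, 1 ≤ n →
      ‖lam n - (2 * (n : ℂ) * (Real.pi : ℂ) / (L : ℂ) +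
        Complex.I * (Real.log 3 : ℂ) / (L : ℂ))‖ ≤ C₀ / n) :
    ∃ C > (0:ℝ), ∀ n m : ℕ, 1 ≤ n → n < m →
      (‖∫ x in (0:ℝ)..L,
          Complex.exp (Complex.I * lam n * x) *
            (starRingEnd ℂ) (Complex.exp (Complex.I * lam m * x))‖ +
        ‖∫ x in (0:ℝ)..L,
          Complex.exp (-(Complex.I) * lam n * x) *
            (starRingEnd ℂ) (Complex.exp (-(Complex.I) * lam m * x))‖ ≤
        C / ((m : ℝ) - n)) ∧
      (‖∫ x in (0:ℝ)..L,
          Complex.exp (Complex.I * lam n * x) *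
            (starRingEnd ℂ) (Complex.exp (-(Complex.I) * lam m * x))‖ +
        ‖∫ x in (0:ℝ)..L,
          Complex.exp (-(Complex.I) * lam n * x) *
            (starRingEnd ℂ) (Complex.exp (Complex.I * lam m * x))‖ ≤
        C / ((m : ℝ) + n)) := by
  have hβ : 0 ≤ Real.log 3 / L := div_nonneg (Real.log_nonneg (by norm_num)) hL.le
  refine ⟨2 * ((L + 2) * Real.exp ((2 * (Real.log 3 / L) + 2 * C₀) * L) * (1 + 2 * C₀) /
    (2 * π / L)), by positivity, fun n m hn hnm => ?_⟩
  obtain ⟨hn_re, hn_im⟩ := abs_re_sub_le_and_abs_im_sub_le hC₀.le hn (hlam n hn)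
  obtain ⟨hm_re, hm_im⟩ :=
    abs_re_sub_le_and_abs_im_sub_le hC₀.le (hn.trans hnm.le) (hlam m (hn.trans hnm.le))
  have hnm' : (n : ℝ) < m := by exact_mod_cast hnm
  have hneg₁ (p q : ℂ) : -I * p + starRingEnd ℂ (-I * q) = -(I * p + starRingEnd ℂ (I * q)) := by
    simp only [map_mul, map_neg]; ring
  have hneg₂ (p q : ℂ) : -I * p + starRingEnd ℂ (I * q) = -(I * p + starRingEnd ℂ (-I * q)) := by
    simp only [map_mul, map_neg]; ring
  simp only [exp_mul_ofReal_mul_conj_exp, hneg₁, hneg₂]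
  exact ⟨norm_integral_exp_mul_add_norm_integral_exp_neg_mul_le hL.le (by positivity)
      (by linarith) (by positivity) (abs_re_I_mul_add_conj_I_mul_le hβ hn_im hm_im)
      (le_abs_im_I_mul_add_conj_I_mul hn_re hm_re),
    norm_integral_exp_mul_add_norm_integral_exp_neg_mul_le hL.le (by positivity)
      (by positivity) (by positivity) (abs_re_I_mul_add_conj_neg_I_mul_le hβ hn_im hm_im)
      (le_abs_im_I_mul_add_conj_neg_I_mul hn_re hm_re)⟩
end

section
/- Let L > 0, C₀ > 0, and let (λ_n)_{n ≥ 1} be complex numbers with |λ_n − (2nπ/L + i (ln 3)/L)| ≤ C₀/n for all n ≥ 1. Define φ_n, φ̃_n ∈ L²(0,L) by φ_n(x) := e^{iλ_n x} and φ̃_n(x) := e^{−iλ_n x}. Then there exists a constant C > 0 such that for all n ≥ 1: |‖φ_n‖²_{L²(0,L)} − 4L/(9 ln 3)| ≤ C/n, |‖φ̃_n‖²_{L²(0,L)} − 4L/(ln 3)| ≤ C/n, and |⟨φ_n, φ̃_n⟩| ≤ C/n, where ⟨f, g⟩ := ∫₀^L f(x) conj(g(x)) dx. -/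
/-!
Write `λ_n = a + i b`. Then `|φ_n|² = e^{-2bx}`, `|φ̃_n|² = e^{2bx}` and `φ_n · conj φ̃_n = e^{2iax}`,
so all three quantities are integrals `∫₀ᴸ e^{zx} dx`. On a half-plane `Re z ≤ M` this integral is
Lipschitz in `z` (mean value theorem for `exp`), and the hypothesis moves `z` by `O(1/n)` from
`∓2 ln 3 / L`, resp. `4nπi/L`, where the integral is exactly `4L/(9 ln 3)`, `4L/ln 3`, resp. `0`.
-/

open Complex Real

theorem norm_cexp_sub_cexp_le {M : ℝ} {u v : ℂ} (hu : u.re ≤ M) (hv : v.re ≤ M) :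
    ‖cexp u - cexp v‖ ≤ Real.exp M * ‖u - v‖ :=
  (convex_halfSpace_re_le M).norm_image_sub_le_of_norm_deriv_le
    (fun _ _ => differentiableAt_exp) (fun z hz => by
      rw [Complex.deriv_exp, norm_exp]; exact Real.exp_le_exp.2 hz) hv hu

theorem norm_integral_cexp_mul_sub_le {L M : ℝ} (hL : 0 ≤ L) (hM : 0 ≤ M) {z w : ℂ}
    (hz : z.re ≤ M) (hw : w.re ≤ M) :
    ‖(∫ x in (0:ℝ)..L, cexp (z * x)) - ∫ x in (0:ℝ)..L, cexp (w * x)‖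
      ≤ L ^ 2 * Real.exp (M * L) * ‖z - w‖ := by
  have hpt : ∀ x ∈ Set.uIoc (0:ℝ) L,
      ‖cexp (z * x) - cexp (w * x)‖ ≤ Real.exp (M * L) * (‖z - w‖ * L) := by
    intro x hx
    rw [Set.uIoc_of_le hL] at hx
    have hre : ∀ c : ℂ, c.re ≤ M → (c * x).re ≤ M * L := fun c hc => by
      simpa using mul_le_mul hc hx.2 hx.1.le hM
    calc ‖cexp (z * x) - cexp (w * x)‖ ≤ Real.exp (M * L) * ‖z * x - w * x‖ :=
          norm_cexp_sub_cexp_le (hre z hz) (hre w hw)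
      _ ≤ Real.exp (M * L) * (‖z - w‖ * L) := by
          rw [← sub_mul, norm_mul, norm_real, Real.norm_of_nonneg hx.1.le]
          gcongr
          exact hx.2
  rw [← intervalIntegral.integral_sub ((by fun_prop : Continuous _).intervalIntegrable _ _)
    ((by fun_prop : Continuous _).intervalIntegrable _ _)]
  calc _ ≤ Real.exp (M * L) * (‖z - w‖ * L) * |L - 0| :=
        intervalIntegral.norm_integral_le_of_norm_le_const hpt
    _ = _ := by rw [sub_zero, abs_of_nonneg hL]; ring

theorem abs_integral_exp_mul_sub_le {L M : ℝ} (hL : 0 ≤ L) (hM : 0 ≤ M) {s t : ℝ}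
    (hs : s ≤ M) (ht : t ≤ M) :
    |(∫ x in (0:ℝ)..L, Real.exp (s * x)) - ∫ x in (0:ℝ)..L, Real.exp (t * x)|
      ≤ L ^ 2 * Real.exp (M * L) * |s - t| := by
  have key := norm_integral_cexp_mul_sub_le hL hM (z := s) (w := t) (by simpa) (by simpa)
  simpa only [← ofReal_mul, ← ofReal_exp, intervalIntegral.integral_ofReal, ← ofReal_sub,
    norm_real, Real.norm_eq_abs] using key

theorem integral_exp_mul_of_ne_zero {t : ℝ} (ht : t ≠ 0) (L : ℝ) :
    ∫ x in (0:ℝ)..L, Real.exp (t * x) = (Real.exp (t * L) - 1) / t := by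
  apply ofReal_injective
  rw [← intervalIntegral.integral_ofReal]
  push_cast
  rw [integral_exp_mul_complex (ofReal_ne_zero.2 ht)]
  simp

theorem exp_two_mul_log_three : Real.exp (2 * Real.log 3) = 9 := by
  rw [← Real.log_rpow (by norm_num), Real.exp_log (by norm_num)]
  norm_num

theorem integral_exp_two_log_three_div_mul {L : ℝ} (hL : 0 < L) :
    ∫ x in (0:ℝ)..L, Real.exp (2 * (Real.log 3 / L) * x) = 4 * L / Real.log 3 := by
  have hlog : 0 < Real.log 3 := Real.log_pos (by norm_num)
  rw [integral_exp_mul_of_ne_zero (by positivity), mul_assoc, div_mul_cancel₀ _ hL.ne',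
    exp_two_mul_log_three]
  field_simp
  ring

theorem integral_exp_neg_two_log_three_div_mul {L : ℝ} (hL : 0 < L) :
    ∫ x in (0:ℝ)..L, Real.exp (-(2 * (Real.log 3 / L)) * x) = 4 * L / (9 * Real.log 3) := by
  have hlog : 0 < Real.log 3 := Real.log_pos (by norm_num)
  rw [integral_exp_mul_of_ne_zero (neg_ne_zero.2 (by positivity)), neg_mul, mul_assoc,
    div_mul_cancel₀ _ hL.ne', Real.exp_neg, exp_two_mul_log_three]
  field_simp
  ring

theorem integral_cexp_two_pi_nat_mul_I_eq_zero {L : ℝ} (hL : L ≠ 0) {k : ℕ} (hk : k ≠ 0) :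
    ∫ x in (0:ℝ)..L, cexp ((2 * π * k / L : ℝ) * I * x) = 0 := by
  have hL' : (L : ℂ) ≠ 0 := ofReal_ne_zero.2 hL
  have hc : ((2 * π * k / L : ℝ) * I : ℂ) ≠ 0 := by
    simp [hk, pi_ne_zero, hL, I_ne_zero]
  rw [integral_exp_mul_complex hc,
    show ((2 * π * k / L : ℝ) * I * L : ℂ) = k * (2 * π * I) by push_cast; field_simp,
    exp_nat_mul_two_pi_mul_I]
  simp

theorem sq_norm_cexp_I_mul (μ : ℂ) (x : ℝ) :
    ‖cexp (I * μ * x)‖ ^ 2 = Real.exp (-(2 * μ.im) * x) := by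
  rw [norm_exp, ← Real.exp_nat_mul]
  congr 1
  simp only [mul_re, mul_im, I_re, I_im, ofReal_re, ofReal_im]
  ring

theorem sq_norm_cexp_neg_I_mul (μ : ℂ) (x : ℝ) :
    ‖cexp (-I * μ * x)‖ ^ 2 = Real.exp (2 * μ.im * x) := by
  rw [norm_exp, ← Real.exp_nat_mul]
  congr 1
  simp only [mul_re, mul_im, neg_re, neg_im, I_re, I_im, ofReal_re, ofReal_im]
  ring

theorem cexp_I_mul_mul_conj_cexp_neg_I_mul (μ : ℂ) (x : ℝ) :
    cexp (I * μ * x) * starRingEnd ℂ (cexp (-I * μ * x)) = cexp ((2 * μ.re : ℝ) * I * x) := by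
  rw [← exp_conj, ← Complex.exp_add, ofReal_mul, re_eq_add_conj]
  congr 1
  simp only [map_mul, map_neg, conj_I, conj_ofReal]
  push_cast
  ring

theorem re_im_sub_center (L : ℝ) (n : ℕ) (μ : ℂ) :
    (μ - (2 * (n : ℂ) * π / L + I * Real.log 3 / L)).re = μ.re - 2 * n * π / L ∧
      (μ - (2 * (n : ℂ) * π / L + I * Real.log 3 / L)).im = μ.im - Real.log 3 / L := by
  constructor <;> simp [-ofNat_log, div_ofReal_re, div_ofReal_im]

/-- Norm asymptotics for the exponentials `φ_n(x) = e^{iλ_n x}`, `φ̃_n(x) = e^{−iλ_n x}` in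
`L²(0, L)`, where `λ_n = 2nπ/L + i ln(3)/L + O(1/n)`:
`‖φ_n‖² = 4L/(9 ln 3) + O(1/n)`, `‖φ̃_n‖² = 4L/ln 3 + O(1/n)`, `⟨φ_n, φ̃_n⟩ = O(1/n)`. -/
theorem norm_asymptotics (L : ℝ) (hL : 0 < L) (C₀ : ℝ) (hC₀ : 0 < C₀) (lam : ℕ → ℂ)
    (hlam : ∀ n : ℕ, 1 ≤ n →
      ‖(lam n - (2 * (n : ℂ) * (Real.pi : ℂ) / (L : ℂ) +
        Complex.I * (Real.log 3 : ℂ) / (L : ℂ)))‖ ≤ C₀ / n) :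
    ∃ C > (0:ℝ), ∀ n : ℕ, 1 ≤ n →
      |(∫ x in (0:ℝ)..L, ‖Complex.exp (Complex.I * lam n * x)‖ ^ 2) -
          4 * L / (9 * Real.log 3)| ≤ C / n ∧
      |(∫ x in (0:ℝ)..L, ‖Complex.exp (-(Complex.I) * lam n * x)‖ ^ 2) -
          4 * L / Real.log 3| ≤ C / n ∧
      ‖(∫ x in (0:ℝ)..L,
          Complex.exp (Complex.I * lam n * x) *
            (starRingEnd ℂ) (Complex.exp (-(Complex.I) * lam n * x)))‖ ≤ C / n := by
  have hb₀ : 0 < Real.log 3 / L := div_pos (Real.log_pos (by norm_num)) hL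
  set M := 2 * (Real.log 3 / L + C₀) with hM_def
  have hM : 0 ≤ M := by positivity
  refine ⟨L ^ 2 * Real.exp (M * L) * (2 * C₀), by positivity, fun n hn => ?_⟩
  obtain ⟨hre, him⟩ : |(lam n).re - 2 * n * π / L| ≤ C₀ / n ∧
      |(lam n).im - Real.log 3 / L| ≤ C₀ / n := by
    obtain ⟨hr, hi⟩ := re_im_sub_center L n (lam n)
    exact ⟨hr ▸ (abs_re_le_norm _).trans (hlam n hn), hi ▸ (abs_im_le_norm _).trans (hlam n hn)⟩
  have hC : C₀ / n ≤ C₀ := div_le_self hC₀.le (by exact_mod_cast hn)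
  have him_le := abs_le.1 (him.trans hC)
  have hscale : ∀ s t : ℝ, |s - t| ≤ 2 * (C₀ / n) →
      L ^ 2 * Real.exp (M * L) * |s - t| ≤ L ^ 2 * Real.exp (M * L) * (2 * C₀) / n := by
    intro s t hst
    rw [mul_div_assoc, mul_div_assoc]
    gcongr
  refine ⟨?_, ?_, ?_⟩
  · simp_rw [sq_norm_cexp_I_mul, ← integral_exp_neg_two_log_three_div_mul hL]
    refine (abs_integral_exp_mul_sub_le hL.le hM (by linarith) (by linarith)).trans
      (hscale _ _ ?_)
    rw [neg_sub_neg, ← mul_sub, abs_mul, abs_two, abs_sub_comm]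
    linarith
  · simp_rw [sq_norm_cexp_neg_I_mul, ← integral_exp_two_log_three_div_mul hL]
    refine (abs_integral_exp_mul_sub_le hL.le hM (by linarith) (by linarith)).trans
      (hscale _ _ ?_)
    rw [← mul_sub, abs_mul, abs_two]
    linarith
  · simp_rw [cexp_I_mul_mul_conj_cexp_neg_I_mul]
    rw [← sub_zero (∫ x in (0:ℝ)..L, _),
      ← integral_cexp_two_pi_nat_mul_I_eq_zero hL.ne' (k := 2 * n) (by omega)]
    refine (norm_integral_cexp_mul_sub_le hL.le hM (by simpa) (by simpa)).trans ?_
    rw [← sub_mul, ← ofReal_sub, norm_mul, norm_I, mul_one, norm_real, Real.norm_eq_abs]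
    refine hscale _ _ ?_
    rw [show 2 * π * ((2 * n : ℕ) : ℝ) / L = 2 * (2 * n * π / L) by push_cast; ring, ← mul_sub,
      abs_mul, abs_two]
    linarith
end

section
/- Let V be a complex Hilbert space and (φ_n)_{n ∈ ℕ} a sequence in V with ‖φ_n‖ = 1 for all n. Suppose there is a constant C > 0 such that |⟨φ_n, φ_m⟩| ≤ C / (√(1 + n²) · (m − n)) for all integers 0 ≤ n < m. Then there exists a constant C̃ > 0, depending only on C, such that for every square-summable sequence a = (a_n)_{n ∈ ℕ} of complex numbers the series Σ_{n=0}^∞ a_n φ_n converges in V and ‖Σ_{n=0}^∞ a_n φ_n‖² ≤ (1 + C̃) Σ_{n=0}^∞ |a_n|². -/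
/-! The Gram matrix of the `φ n` is the identity plus an off-diagonal part bounded by
`4 C / (max n m + 1)`, because `√(1 + n²) (m - n) ≥ (m + 1) / 4` for `n < m`. The kernel
`1 / (max n m + 1)` defines a bounded form on `ℓ²` (a discrete Hardy inequality), as the Schur test
with weights `(n + 1)^(-1/2)` shows. Hence `‖∑ n ∈ s, a n • φ n‖² ≤ (1 + 16 C) ∑ n ∈ s, ‖a n‖²`
for every finite `s`; applied to tails this makes the series Cauchy. -/

open Complex Filter

open Finset

theorem schur_test {ι : Type*} (s : Finset ι) (k : ι → ι → ℝ) (p : ι → ℝ) (B : ℝ)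
    (hk : ∀ i j, 0 ≤ k i j) (hk_symm : ∀ i j, k i j = k j i) (hp : ∀ i, 0 < p i)
    (hrow : ∀ i ∈ s, ∑ j ∈ s, k i j * p j ≤ B * p i) (b : ι → ℝ) :
    ∑ i ∈ s, ∑ j ∈ s, k i j * b i * b j ≤ B * ∑ i ∈ s, b i ^ 2 := by
  have amgm : ∀ i j, k i j * b i * b j ≤
      (k i j * p j / p i * b i ^ 2 + k j i * p i / p j * b j ^ 2) / 2 := by
    intro i j
    have hpi := hp i
    have hpj := hp j
    rw [hk_symm j i, le_div_iff₀ two_pos, div_mul_eq_mul_div, div_mul_eq_mul_div,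
      div_add_div _ _ hpi.ne' hpj.ne', le_div_iff₀ (mul_pos hpi hpj)]
    nlinarith [mul_nonneg (hk i j) (sq_nonneg (p j * b i - p i * b j))]
  calc ∑ i ∈ s, ∑ j ∈ s, k i j * b i * b j
      ≤ ∑ i ∈ s, ∑ j ∈ s, (k i j * p j / p i * b i ^ 2 + k j i * p i / p j * b j ^ 2) / 2 :=
        sum_le_sum fun i _ => sum_le_sum fun j _ => amgm i j
    _ = ∑ i ∈ s, b i ^ 2 / p i * ∑ j ∈ s, k i j * p j := by
        have swap : ∑ i ∈ s, ∑ j ∈ s, k j i * p i / p j * b j ^ 2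
            = ∑ i ∈ s, ∑ j ∈ s, k i j * p j / p i * b i ^ 2 := sum_comm
        simp only [add_div, sum_add_distrib, ← sum_div, swap, add_halves, mul_sum]
        exact sum_congr rfl fun i _ => sum_congr rfl fun j _ => by ring
    _ ≤ ∑ i ∈ s, b i ^ 2 / p i * (B * p i) :=
        sum_le_sum fun i hi => mul_le_mul_of_nonneg_left (hrow i hi)
          (div_nonneg (sq_nonneg _) (hp i).le)
    _ = B * ∑ i ∈ s, b i ^ 2 := by
        rw [mul_sum]
        exact sum_congr rfl fun i _ => by field_simp [(hp i).ne']

theorem sum_range_inv_sqrt_succ_le (N : ℕ) : ∑ m ∈ range N, (√(m + 1))⁻¹ ≤ 2 * √N := by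
  induction N with
  | zero => simp
  | succ N ih =>
    rw [sum_range_succ]
    have hx := Real.sq_sqrt (Nat.cast_nonneg (α := ℝ) N)
    have hy := Real.sq_sqrt (by positivity : (0 : ℝ) ≤ N + 1)
    have hy0 : 0 < √((N : ℝ) + 1) := by positivity
    have step : (√((N : ℝ) + 1))⁻¹ ≤ 2 * (√((N : ℝ) + 1) - √N) := by
      rw [inv_le_iff_one_le_mul₀ hy0]
      nlinarith [sq_nonneg (√((N : ℝ) + 1) - √N)]
    push_cast
    linarith

theorem sum_Ico_inv_succ_mul_inv_sqrt_succ_le (n N : ℕ) :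
    ∑ m ∈ Ico (n + 1) N, ((m : ℝ) + 1)⁻¹ * (√(m + 1))⁻¹ ≤ 2 * (√(n + 1))⁻¹ := by
  suffices h : ∀ N, n + 1 ≤ N →
      ∑ m ∈ Ico (n + 1) N, ((m : ℝ) + 1)⁻¹ * (√(m + 1))⁻¹ ≤ 2 * ((√(n + 1))⁻¹ - (√N)⁻¹) by
    rcases le_or_gt (n + 1) N with hN | hN
    · linarith [h N hN, inv_nonneg.2 (Real.sqrt_nonneg N)]
    · rw [Ico_eq_empty_of_le hN.le, sum_empty]
      positivity
  intro N hN
  induction N, hN using Nat.le_induction with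
  | base => simp
  | succ N hN ih =>
    rw [sum_Ico_succ_top hN]
    set x := √(N : ℝ)
    set y := √((N : ℝ) + 1)
    have hx2 : x ^ 2 = N := Real.sq_sqrt (Nat.cast_nonneg _)
    have hy2 : y ^ 2 = N + 1 := Real.sq_sqrt (by positivity)
    have hx : 0 < x := Real.sqrt_pos.2 (by exact_mod_cast (show 0 < N by omega))
    have hxy : x ≤ y := Real.sqrt_le_sqrt (by linarith)
    have step : ((N : ℝ) + 1)⁻¹ * y⁻¹ ≤ 2 * (x⁻¹ - y⁻¹) := by
      rw [← hy2, ← mul_inv, inv_sub_inv hx.ne' (hx.trans_le hxy).ne',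
        inv_le_iff_one_le_mul₀ (by positivity), mul_div_assoc', div_mul_eq_mul_div,
        le_div_iff₀ (by positivity)]
      nlinarith [mul_nonneg (mul_nonneg (sub_nonneg.2 hxy) (sub_nonneg.2 hxy))
        (by positivity : 0 ≤ 2 * y + x)]
    push_cast
    linarith

theorem sum_inv_max_succ_mul_inv_sqrt_succ_le (n : ℕ) (s : Finset ℕ) :
    ∑ m ∈ s, ((max n m : ℕ) + 1 : ℝ)⁻¹ * (√(m + 1))⁻¹ ≤ 4 * (√(n + 1))⁻¹ := by
  set N := n + 1 + s.sup id
  have hs : s ⊆ range N := fun m hm => by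
    have : m ≤ s.sup id := le_sup (f := id) hm
    exact mem_range.2 (by omega)
  have head : ∑ m ∈ range (n + 1), ((max n m : ℕ) + 1 : ℝ)⁻¹ * (√(m + 1))⁻¹
      ≤ 2 * (√(n + 1))⁻¹ := by
    calc ∑ m ∈ range (n + 1), ((max n m : ℕ) + 1 : ℝ)⁻¹ * (√(m + 1))⁻¹
        = ((n : ℝ) + 1)⁻¹ * ∑ m ∈ range (n + 1), (√(m + 1))⁻¹ := by
          rw [mul_sum]
          refine sum_congr rfl fun m hm => ?_
          rw [max_eq_left (Nat.lt_succ_iff.1 (mem_range.1 hm))]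
      _ ≤ ((n : ℝ) + 1)⁻¹ * (2 * √(n + 1 : ℕ)) := by
          gcongr
          exact sum_range_inv_sqrt_succ_le _
      _ = 2 * (√(n + 1))⁻¹ := by
          push_cast
          rw [← Real.sqrt_div_self, div_eq_inv_mul]
          ring
  have tail : ∑ m ∈ Ico (n + 1) N, ((max n m : ℕ) + 1 : ℝ)⁻¹ * (√(m + 1))⁻¹
      ≤ 2 * (√(n + 1))⁻¹ := by
    refine le_of_eq_of_le (sum_congr rfl fun m hm => ?_)
      (sum_Ico_inv_succ_mul_inv_sqrt_succ_le n N)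
    rw [max_eq_right (by have := (mem_Ico.1 hm).1; omega)]
  calc ∑ m ∈ s, ((max n m : ℕ) + 1 : ℝ)⁻¹ * (√(m + 1))⁻¹
      ≤ ∑ m ∈ range N, ((max n m : ℕ) + 1 : ℝ)⁻¹ * (√(m + 1))⁻¹ :=
        sum_le_sum_of_subset_of_nonneg hs fun _ _ _ => by positivity
    _ = _ := (sum_range_add_sum_Ico _ (show n + 1 ≤ N by omega)).symm
    _ ≤ 4 * (√(n + 1))⁻¹ := by linarith

theorem sum_inv_max_succ_mul_mul_le (s : Finset ℕ) (b : ℕ → ℝ) :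
    ∑ n ∈ s, ∑ m ∈ s, ((max n m : ℕ) + 1 : ℝ)⁻¹ * b n * b m ≤ 4 * ∑ n ∈ s, b n ^ 2 :=
  schur_test s _ (fun m => (√(m + 1))⁻¹) 4 (fun _ _ => by positivity)
    (fun n m => by rw [max_comm]) (fun _ => by positivity)
    (fun n _ => sum_inv_max_succ_mul_inv_sqrt_succ_le n s) b

section InnerProductSpace

variable {𝕜 E : Type*} [RCLike 𝕜] [NormedAddCommGroup E] [InnerProductSpace 𝕜 E]

theorem norm_sum_smul_sq_le {ι : Type*} (s : Finset ι) (a : ι → 𝕜) (v : ι → E) :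
    ‖∑ i ∈ s, a i • v i‖ ^ 2 ≤ ∑ i ∈ s, ∑ j ∈ s, ‖inner 𝕜 (v i) (v j)‖ * ‖a i‖ * ‖a j‖ := by
  rw [@norm_sq_eq_re_inner 𝕜, inner_self_re_eq_norm, sum_inner]
  refine (norm_sum_le _ _).trans (sum_le_sum fun i _ => ?_)
  rw [inner_sum]
  refine (norm_sum_le _ _).trans_eq (sum_congr rfl fun j _ => ?_)
  rw [inner_smul_left, inner_smul_right, norm_mul, norm_mul, RCLike.norm_conj]
  ring

theorem le_four_mul_sqrt_one_add_sq_mul_sub {n m : ℕ} (h : n < m) :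
    (m + 1 : ℝ) ≤ 4 * (√(1 + n ^ 2) * (m - n)) := by
  have hn : (n + 1 : ℝ) / 2 ≤ √(1 + n ^ 2) :=
    Real.le_sqrt_of_sq_le (by nlinarith [sq_nonneg ((n : ℝ) - 1)])
  have hmn : (n + 1 : ℝ) ≤ m := by exact_mod_cast h
  nlinarith [mul_le_mul_of_nonneg_right hn (by linarith : (0 : ℝ) ≤ m - n),
    mul_nonneg (Nat.cast_nonneg (α := ℝ) n) (by linarith : (0 : ℝ) ≤ m - n - 1)]

theorem norm_inner_le_of_almost_orthogonal (C : ℝ) (hC : 0 ≤ C) (φ : ℕ → E)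
    (hφ : ∀ n, ‖φ n‖ = 1)
    (hG : ∀ n m : ℕ, n < m →
      ‖(inner 𝕜 (φ n) (φ m) : 𝕜)‖ ≤ C / (Real.sqrt (1 + (n : ℝ) ^ 2) * ((m : ℝ) - n)))
    (n m : ℕ) :
    ‖inner 𝕜 (φ n) (φ m)‖ ≤ (if n = m then 1 else 0) + 4 * C * ((max n m : ℕ) + 1 : ℝ)⁻¹ := by
  have off_diag : ∀ n m : ℕ, n < m →
      ‖inner 𝕜 (φ n) (φ m)‖ ≤ 4 * C * ((max n m : ℕ) + 1 : ℝ)⁻¹ := by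
    intro n m h
    have hpos : (0 : ℝ) < √(1 + n ^ 2) * (m - n) :=
      mul_pos (by positivity) (sub_pos.2 (by exact_mod_cast h))
    rw [max_eq_right h.le, ← div_eq_mul_inv]
    refine (hG n m h).trans ?_
    rw [div_le_div_iff₀ hpos (by positivity)]
    nlinarith [le_four_mul_sqrt_one_add_sq_mul_sub h]
  rcases lt_trichotomy n m with h | rfl | h
  · rw [if_neg h.ne]
    linarith [off_diag n m h]
  · rw [if_pos rfl, inner_self_eq_norm_sq_to_K, hφ]
    simp only [RCLike.ofReal_one, one_pow, norm_one, le_add_iff_nonneg_right]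
    positivity
  · rw [if_neg h.ne', norm_inner_symm, max_comm]
    linarith [off_diag m n h]

theorem norm_sum_smul_sq_le_of_almost_orthogonal (C : ℝ) (hC : 0 ≤ C) (φ : ℕ → E)
    (hφ : ∀ n, ‖φ n‖ = 1)
    (hG : ∀ n m : ℕ, n < m →
      ‖(inner 𝕜 (φ n) (φ m) : 𝕜)‖ ≤ C / (Real.sqrt (1 + (n : ℝ) ^ 2) * ((m : ℝ) - n)))
    (a : ℕ → 𝕜) (s : Finset ℕ) :
    ‖∑ n ∈ s, a n • φ n‖ ^ 2 ≤ (1 + 16 * C) * ∑ n ∈ s, ‖a n‖ ^ 2 := by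
  calc ‖∑ n ∈ s, a n • φ n‖ ^ 2
      ≤ ∑ n ∈ s, ∑ m ∈ s, ‖inner 𝕜 (φ n) (φ m)‖ * ‖a n‖ * ‖a m‖ := norm_sum_smul_sq_le s a φ
    _ ≤ ∑ n ∈ s, ∑ m ∈ s,
          ((if n = m then 1 else 0) + 4 * C * ((max n m : ℕ) + 1 : ℝ)⁻¹) * ‖a n‖ * ‖a m‖ := by
        gcongr with n _ m _
        exact norm_inner_le_of_almost_orthogonal C hC φ hφ hG n m
    _ = ∑ n ∈ s, ‖a n‖ ^ 2
          + 4 * C * ∑ n ∈ s, ∑ m ∈ s, ((max n m : ℕ) + 1 : ℝ)⁻¹ * ‖a n‖ * ‖a m‖ := by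
        simp only [add_mul, ite_mul, one_mul, zero_mul, sum_add_distrib, sum_ite_eq, sum_ite_mem,
          inter_self, mul_sum, mul_assoc, sq]
    _ ≤ ∑ n ∈ s, ‖a n‖ ^ 2 + 4 * C * (4 * ∑ n ∈ s, ‖a n‖ ^ 2) := by
        gcongr
        exact sum_inv_max_succ_mul_mul_le s _
    _ = (1 + 16 * C) * ∑ n ∈ s, ‖a n‖ ^ 2 := by ring

end InnerProductSpace

section Series

variable {E : Type*} [NormedAddCommGroup E] {f : ℕ → E} {g : ℕ → ℝ} {K : ℝ}

theorem summable_of_norm_sum_sq_le [CompleteSpace E] (hK : 0 ≤ K) (hg : Summable g)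
    (hfg : ∀ s : Finset ℕ, ‖∑ n ∈ s, f n‖ ^ 2 ≤ K * ∑ n ∈ s, g n) : Summable f := by
  rw [summable_iff_vanishing_norm]
  intro ε hε
  obtain ⟨s, hs⟩ := summable_iff_vanishing_norm.1 hg (ε ^ 2 / (K + 1)) (by positivity)
  refine ⟨s, fun t ht => lt_of_pow_lt_pow_left₀ 2 hε.le ?_⟩
  calc ‖∑ n ∈ t, f n‖ ^ 2 ≤ K * ‖∑ n ∈ t, g n‖ :=
        (hfg t).trans (mul_le_mul_of_nonneg_left (le_abs_self _) hK)
    _ ≤ K * (ε ^ 2 / (K + 1)) := mul_le_mul_of_nonneg_left (hs t ht).le hK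
    _ < ε ^ 2 := by
        rw [mul_div_assoc', div_lt_iff₀ (by linarith)]
        nlinarith [pow_pos hε 2]

theorem norm_tsum_sq_le_of_norm_sum_sq_le (hf : Summable f) (hg : Summable g)
    (hfg : ∀ s : Finset ℕ, ‖∑ n ∈ s, f n‖ ^ 2 ≤ K * ∑ n ∈ s, g n) :
    ‖∑' n, f n‖ ^ 2 ≤ K * ∑' n, g n :=
  le_of_tendsto_of_tendsto' ((hf.hasSum.tendsto_sum_nat.norm).pow 2)
    (hg.hasSum.tendsto_sum_nat.const_mul K) fun N => hfg (range N)

end Series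

/-- Almost-orthogonality estimate: if `(φ_n)` are unit vectors in a complex Hilbert space with
`|⟨φ_n, φ_m⟩| ≤ C/(√(1 + n²)(m − n))` for `n < m`, then there is `C̃ > 0` depending only on `C`
such that for every `a ∈ ℓ²` the series `Σ a_n φ_n` converges and
`‖Σ a_n φ_n‖² ≤ (1 + C̃) Σ |a_n|²`. -/
theorem almost_orthogonal_series (C : ℝ) (hC : 0 < C) :
    ∃ Ct : ℝ, 0 < Ct ∧
      ∀ (V : Type*) [NormedAddCommGroup V] [InnerProductSpace ℂ V] [CompleteSpace V]
        (φ : ℕ → V), (∀ n, ‖φ n‖ = 1) →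
        (∀ n m : ℕ, n < m →
          ‖(inner ℂ (φ n) (φ m) : ℂ)‖ ≤ C / (Real.sqrt (1 + (n : ℝ) ^ 2) * ((m : ℝ) - n))) →
        ∀ a : ℕ → ℂ, Summable (fun n => ‖a n‖ ^ 2) →
          ∃ s : V,
            Tendsto (fun N => ∑ n ∈ Finset.range N, a n • φ n) atTop (nhds s) ∧
            ‖s‖ ^ 2 ≤ (1 + Ct) * ∑' n, ‖a n‖ ^ 2 := by
  refine ⟨16 * C, by positivity, fun V _ _ _ φ hφ hG a ha => ?_⟩
  have bound := norm_sum_smul_sq_le_of_almost_orthogonal C hC.le φ hφ hG a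
  have hsum : Summable fun n => a n • φ n :=
    summable_of_norm_sum_sq_le (by positivity) ha bound
  exact ⟨_, hsum.hasSum.tendsto_sum_nat, norm_tsum_sq_le_of_norm_sum_sq_le hsum ha bound⟩
end
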